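/- arXiv:1101.3804 — 8 statements merged into one kernel-verified Lean document; each statement's English description precedes it below -/
import Mathlib

section
/- Let (V,d) be a finite metric space with n points whose maximum pairwise distance is 1. For every ε > 0, every probability distribution p* on V, every function g* : V × ℝ → ℝ, and every real number E such that Σ_{x∈V} p*(x)·|Avg(f) − g*(x, f(x))| ≤ E holds for every 1-Lipschitz function f : V → ℝ, there exists a probability distribution p on V such that Σ_{x∈V} p(x)·|Avg(f) − f(x)| ≤ E + ε holds for every 1-Lipschitz function f : V → ℝ. (That is, up to an arbitrarily small additive ε, the optimal randomized sampling algorithm may be assumed to output exactly the value it observes.) -/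
/-!
We show `∑ p*(x) |Avg f - f x| ≤ E` for every 1-Lipschitz `f`, so `p = p*` works. Write
`h x t = g*(x, t) - t` for the correction the algorithm adds to the value it observes. The error
bound on the 1-Lipschitz functions `f + c` and `c - f` (averages `Avg f + c` and `c - Avg f`)
gives, for every real `c`,
`∑ p*(x) |Avg f - f x - h x (f x + c)| ≤ E` and `∑ p*(x) |Avg f - f x + h x (c - f x)| ≤ E`,
and constant functions give `p*(x) |h x t| ≤ E`. Averaging over `c` in the grid
`{∑ k_y f y : 0 ≤ k_y < K}`, which is almost invariant under translation by each `f x`, replaces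
both `h x (f x + c)` and `h x (c - f x)` by one average `a x`, up to `O(E / K)`. Adding the two
inequalities, `2 ∑ p*(x) |Avg f - f x| ≤ 2 E + O(E / K)`, and `K → ∞`.
-/

open Finset
open scoped BigOperators

lemma abs_expect_fin_succ_sub_le {K : ℕ} [NeZero K] (ψ : ℕ → ℝ) {M : ℝ} (hψ : ∀ m, |ψ m| ≤ M) :
    |𝔼 m : Fin K, (ψ (m + 1) - ψ m)| ≤ 2 * M / K := by
  have hK : (0 : ℝ) < K := by exact_mod_cast Nat.pos_of_neZero K
  rw [Fintype.expect_eq_sum_div_card, Fintype.card_fin,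
    Fin.sum_univ_eq_sum_range (fun m => ψ (m + 1) - ψ m), Finset.sum_range_sub, abs_div,
    abs_of_pos hK]
  gcongr
  calc |ψ K - ψ 0| ≤ |ψ K| + |ψ 0| := abs_sub _ _
    _ ≤ 2 * M := by linarith [hψ K, hψ 0]

section Grid

variable {V : Type*} [Fintype V] [DecidableEq V] {K : ℕ}

def gridPoint (w : V → ℝ) (k : V → Fin K) : ℝ := ∑ y, (k y : ℝ) * w y

lemma gridPoint_funSplitAt_symm (w : V → ℝ) (x : V) (m : Fin K) (k : {j // j ≠ x} → Fin K) :
    gridPoint w ((Equiv.funSplitAt x (Fin K)).symm (m, k)) =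
      m * w x + ∑ j : {j // j ≠ x}, (k j : ℝ) * w j := by
  rw [gridPoint, Fintype.sum_eq_add_sum_subtype_ne _ x]
  simp only [Equiv.funSplitAt_symm_apply, dif_pos]
  congr 1
  exact Fintype.sum_congr _ _ fun j => by rw [dif_neg j.2]

lemma expect_funSplitAt (x : V) (F : (V → Fin K) → ℝ) :
    𝔼 k, F k = 𝔼 k : {j // j ≠ x} → Fin K, 𝔼 m, F ((Equiv.funSplitAt x (Fin K)).symm (m, k)) := by
  rw [Fintype.expect_equiv (Equiv.funSplitAt x (Fin K)) F (F ∘ (Equiv.funSplitAt x (Fin K)).symm)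
    fun k => by rw [Function.comp_apply, Equiv.symm_apply_apply], ← univ_product_univ,
    expect_product, expect_comm]
  rfl

lemma abs_expect_gridPoint_add_sub_le [NeZero K] (w : V → ℝ) (x : V) (φ : ℝ → ℝ) {M : ℝ}
    (hφ : ∀ t, |φ t| ≤ M) (r : ℝ) :
    |𝔼 k : V → Fin K, φ (r + w x + gridPoint w k) - 𝔼 k : V → Fin K, φ (r + gridPoint w k)|
      ≤ 2 * M / K := by
  rw [expect_funSplitAt x, expect_funSplitAt x, ← expect_sub_distrib]
  refine (abs_expect_le _ _).trans (expect_le univ_nonempty fun k _ => ?_)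
  let ψ (m : ℕ) := φ (r + ∑ j : {j // j ≠ x}, (k j : ℝ) * w j + m * w x)
  calc _ = |𝔼 m : Fin K, (ψ (m + 1) - ψ m)| := by
        rw [← expect_sub_distrib]
        congr 1
        refine expect_congr rfl fun m _ => ?_
        simp only [ψ, gridPoint_funSplitAt_symm]
        push_cast
        ring_nf
    _ ≤ 2 * M / K := abs_expect_fin_succ_sub_le ψ fun _ => hφ _

end Grid

section Averaging

variable {V : Type*} [Fintype V]

lemma sum_abs_sub_expect_le {ι : Type*} [Fintype ι] [Nonempty ι] (U : V → ℝ) (v : V → ι → ℝ)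
    {E : ℝ} (h : ∀ i, ∑ x, |U x - v x i| ≤ E) : ∑ x, |U x - 𝔼 i, v x i| ≤ E :=
  calc ∑ x, |U x - 𝔼 i, v x i| = ∑ x, |𝔼 i, (U x - v x i)| := by
        simp only [expect_sub_distrib, Fintype.expect_const]
    _ ≤ ∑ x, 𝔼 i, |U x - v x i| := sum_le_sum fun x _ => abs_expect_le _ _
    _ = 𝔼 i, ∑ x, |U x - v x i| := (expect_sum_comm _ _ _).symm
    _ ≤ E := expect_le univ_nonempty fun i _ => h i

lemma sum_abs_sub_le_of_abs_sub_le (U a b : V → ℝ) {E δ : ℝ} (hb : ∑ x, |U x - b x| ≤ E)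
    (hab : ∀ x, |b x - a x| ≤ δ) : ∑ x, |U x - a x| ≤ E + Fintype.card V * δ :=
  calc ∑ x, |U x - a x| ≤ ∑ x, (|U x - b x| + |b x - a x|) :=
        sum_le_sum fun x _ => abs_sub_le _ _ _
    _ ≤ ∑ x, |U x - b x| + ∑ _x : V, δ := by
        rw [sum_add_distrib]; gcongr with x; exact hab x
    _ ≤ _ := by rw [sum_const, card_univ, nsmul_eq_mul]; linarith

lemma sum_abs_le_of_shift_of_reflect (s U : V → ℝ) (φ : V → ℝ → ℝ) {E : ℝ}
    (hφ : ∀ x t, |φ x t| ≤ E) (hshift : ∀ c, ∑ x, |U x - φ x (s x + c)| ≤ E)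
    (hrefl : ∀ c, ∑ x, |U x + φ x (c - s x)| ≤ E) : ∑ x, |U x| ≤ E := by
  classical
  have hK : ∀ K : ℕ, ∑ x, |U x| ≤ E + Fintype.card V * (2 * E) * (1 / ((K : ℝ) + 1)) := by
    intro K
    have hδ : (2 * E / (K + 1 : ℕ) : ℝ) = 2 * E * (1 / ((K : ℝ) + 1)) := by push_cast; ring
    let a x := 𝔼 k : V → Fin (K + 1), φ x (gridPoint s k)
    have hminus : ∑ x, |U x - a x| ≤ E + Fintype.card V * (2 * E / (K + 1 : ℕ) : ℝ) :=
      sum_abs_sub_le_of_abs_sub_le U a (fun x => 𝔼 k : V → Fin (K + 1), φ x (s x + gridPoint s k))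
        (sum_abs_sub_expect_le _ _ fun k => hshift _)
        fun x => by simpa using abs_expect_gridPoint_add_sub_le (K := K + 1) s x (φ x) (hφ x) 0
    have hplus : ∑ x, |U x - -a x| ≤ E + Fintype.card V * (2 * E / (K + 1 : ℕ) : ℝ) :=
      sum_abs_sub_le_of_abs_sub_le U (-a)
        (fun x => 𝔼 k : V → Fin (K + 1), -φ x (gridPoint s k - s x))
        (sum_abs_sub_expect_le _ _ fun k => by simpa only [sub_neg_eq_add] using hrefl _)
        fun x => by
          have := abs_expect_gridPoint_add_sub_le (K := K + 1) s x (φ x) (hφ x) (-s x)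
          simpa [a, expect_neg_distrib, neg_add_eq_sub] using this
    have htwo : ∀ x, 2 * |U x| ≤ |U x - a x| + |U x - -a x| := fun x => by
      simpa [← two_mul, abs_mul] using abs_add_le (U x - a x) (U x - -a x)
    have := sum_le_sum fun x (_ : x ∈ univ) => htwo x
    rw [← mul_sum, sum_add_distrib] at this
    rw [hδ] at hminus hplus
    linarith
  have hlim : Filter.Tendsto (fun K : ℕ => E + Fintype.card V * (2 * E) * (1 / ((K : ℝ) + 1)))
      Filter.atTop (nhds E) := by
    simpa using (tendsto_one_div_add_atTop_nhds_zero_nat.const_mul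
      (Fintype.card V * (2 * E))).const_add E
  exact ge_of_tendsto' hlim hK

end Averaging

section SamplingError

variable {V : Type*} [PseudoMetricSpace V] [Fintype V]

noncomputable def samplingError (p : V → ℝ) (g : V × ℝ → ℝ) (f : V → ℝ) : ℝ :=
  ∑ x, p x * |(∑ y, f y) / (Fintype.card V : ℝ) - g (x, f x)|

variable {p : V → ℝ} (hp : ∀ x, 0 ≤ p x) {g : V × ℝ → ℝ} {E : ℝ}
  (hE : ∀ f : V → ℝ, (∀ x y, |f x - f y| ≤ dist x y) → samplingError p g f ≤ E)
include hp hE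

lemma abs_mul_sub_le_of_samplingError_le (x : V) (t : ℝ) : |p x * (g (x, t) - t)| ≤ E := by
  have : Nonempty V := ⟨x⟩
  have h := hE (fun _ => t) fun _ _ => by simp
  simp only [samplingError, ← Fintype.expect_eq_sum_div_card, Fintype.expect_const] at h
  calc |p x * (g (x, t) - t)| = p x * |t - g (x, t)| := by
        rw [abs_mul, abs_of_nonneg (hp x), abs_sub_comm]
    _ ≤ ∑ y, p y * |t - g (y, t)| := single_le_sum (f := fun y => p y * |t - g (y, t)|)
        (fun y _ => mul_nonneg (hp y) (abs_nonneg _)) (mem_univ x)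
    _ ≤ E := h

lemma sum_abs_sub_le_of_samplingError_le [Nonempty V] (f : V → ℝ)
    (hf : ∀ x y, |f x - f y| ≤ dist x y) (c : ℝ) :
    ∑ x, |p x * ((∑ y, f y) / (Fintype.card V : ℝ) - f x) - p x * (g (x, f x + c) - (f x + c))|
      ≤ E := by
  refine le_of_eq_of_le (sum_congr rfl fun x _ => ?_)
    (hE (f · + c) fun x y => by simpa using hf x y)
  rw [← mul_sub, abs_mul, abs_of_nonneg (hp x)]
  simp only [← Fintype.expect_eq_sum_div_card, expect_add_distrib, Fintype.expect_const]
  ring_nf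

lemma sum_abs_add_le_of_samplingError_le [Nonempty V] (f : V → ℝ)
    (hf : ∀ x y, |f x - f y| ≤ dist x y) (c : ℝ) :
    ∑ x, |p x * ((∑ y, f y) / (Fintype.card V : ℝ) - f x) + p x * (g (x, c - f x) - (c - f x))|
      ≤ E := by
  refine le_of_eq_of_le (sum_congr rfl fun x _ => ?_)
    (hE (c - f ·) fun x y => by rw [sub_sub_sub_cancel_left, abs_sub_comm]; exact hf x y)
  rw [← mul_add, abs_mul, abs_of_nonneg (hp x), ← abs_neg]
  simp only [← Fintype.expect_eq_sum_div_card, expect_sub_distrib, Fintype.expect_const]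
  ring_nf

end SamplingError

theorem stmt_0_general {V : Type*} [MetricSpace V] [Fintype V]
    (ε : ℝ) (hε : 0 < ε)
    (pstar : V → ℝ) (hpstar_nonneg : ∀ x, 0 ≤ pstar x)
    (hpstar_sum : ∑ x, pstar x = 1)
    (gstar : V × ℝ → ℝ) (E : ℝ)
    (hE : ∀ f : V → ℝ, (∀ x y, |f x - f y| ≤ dist x y) →
      ∑ x, pstar x * |(∑ y, f y) / (Fintype.card V : ℝ) - gstar (x, f x)| ≤ E) :
    ∃ p : V → ℝ, (∀ x, 0 ≤ p x) ∧ (∑ x, p x = 1) ∧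
      ∀ f : V → ℝ, (∀ x y, |f x - f y| ≤ dist x y) →
        ∑ x, p x * |(∑ y, f y) / (Fintype.card V : ℝ) - f x| ≤ E + ε := by
  have : Nonempty V := by
    by_contra h
    simp [not_nonempty_iff.mp h] at hpstar_sum
  refine ⟨pstar, hpstar_nonneg, hpstar_sum, fun f hf => ?_⟩
  calc ∑ x, pstar x * |(∑ y, f y) / (Fintype.card V : ℝ) - f x|
      = ∑ x, |pstar x * ((∑ y, f y) / (Fintype.card V : ℝ) - f x)| := by
        simp only [abs_mul, abs_of_nonneg (hpstar_nonneg _)]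
    _ ≤ E := sum_abs_le_of_shift_of_reflect f _ (fun x t => pstar x * (gstar (x, t) - t))
        (abs_mul_sub_le_of_samplingError_le hpstar_nonneg hE)
        (sum_abs_sub_le_of_samplingError_le hpstar_nonneg hE f hf)
        (sum_abs_add_le_of_samplingError_le hpstar_nonneg hE f hf)
    _ ≤ E + ε := by linarith

/-- Up to an arbitrarily small additive ε, the optimal randomized
sampling algorithm on a finite metric space (of diameter 1) may be assumed to
output exactly the value it observes. -/
theorem stmt_0 {V : Type*} [MetricSpace V] [Fintype V] [Nonempty V]
    (hdiam_le : ∀ x y : V, dist x y ≤ 1) (hdiam_eq : ∃ x y : V, dist x y = 1)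
    (ε : ℝ) (hε : 0 < ε)
    (pstar : V → ℝ) (hpstar_nonneg : ∀ x, 0 ≤ pstar x)
    (hpstar_sum : ∑ x, pstar x = 1)
    (gstar : V × ℝ → ℝ) (E : ℝ)
    (hE : ∀ f : V → ℝ, (∀ x y, |f x - f y| ≤ dist x y) →
      ∑ x, pstar x * |(∑ y, f y) / (Fintype.card V : ℝ) - gstar (x, f x)| ≤ E) :
    ∃ p : V → ℝ, (∀ x, 0 ≤ p x) ∧ (∑ x, p x = 1) ∧
      ∀ f : V → ℝ, (∀ x y, |f x - f y| ≤ dist x y) →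
        ∑ x, p x * |(∑ y, f y) / (Fintype.card V : ℝ) - f x| ≤ E + ε :=
  stmt_0_general ε hε pstar hpstar_nonneg hpstar_sum gstar E hE
end

section
/- Let (V,d) be a finite metric space with n points whose maximum pairwise distance is 1, and let β > 0 be such that for every D > 0, every subset of V of diameter at most D can be covered by at most 6^β balls of diameter D/6. Let o ∈ V be a 1-median of V (a point minimizing Σ_{x∈V} d(o,x)) and let m = (1/n)·Σ_{x∈V} d(o,x). Then for every probability distribution p on V there exists a 1-Lipschitz function f : V → ℝ with Σ_{x∈V} p(x)·|Avg(f) − f(x)| ≥ m/(4·6^β). In other words, the worst-case expected error of any randomized sampling algorithm that outputs the observed value is at least m/(4·6^β). -/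
/-!
The test functions are the distance functions `dist z`: they are 1-Lipschitz and, `o` being a
1-median, their average is at least `m`. If `p` puts mass at least `1 / (8 · 6^β)` outside the
ball `B(o, 3m)`, then `dist o` errs by at least `2m` there. Otherwise the ball carries mass at
least `7/8`; it has diameter at most `6m`, so it is covered by `6^β` balls of radius `m/2`, one of
which, centred at `z` say, carries mass at least `7 / (8 · 6^β)`, and `dist z` errs by at least
`m/2` on it.
-/

open Finset

section

variable {V : Type*}

lemma exists_sum_le_card_mul_sum_dist_le [PseudoMetricSpace V] [DecidableEq V] {p : V → ℝ}
    (hp : ∀ x, 0 ≤ p x) {S C : Finset V} {r : ℝ}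
    (hS : S.Nonempty) (hcover : ∀ x ∈ S, ∃ z ∈ C, dist x z ≤ r) :
    ∃ z, ∑ x ∈ S, p x ≤ #C * ∑ x ∈ S with dist x z ≤ r, p x := by
  choose! g hgC hg using hcover
  have hC : (0 : ℝ) < #C := by
    exact_mod_cast card_pos.2 ⟨g hS.choose, hgC _ hS.choose_spec⟩
  obtain ⟨z, -, hz⟩ := exists_le_sum_fiber_of_maps_to_of_nsmul_le_sum hgC
    (card_pos.1 (by exact_mod_cast hC)) (b := (∑ x ∈ S, p x) / #C)
    (by rw [nsmul_eq_mul, mul_div_cancel₀ _ hC.ne'])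
  have hfiber : ∑ x ∈ S with g x = z, p x ≤ ∑ x ∈ S with dist x z ≤ r, p x :=
    sum_le_sum_of_subset_of_nonneg
      (fun x hx => by
        obtain ⟨hxS, rfl⟩ := mem_filter.1 hx
        exact mem_filter.2 ⟨hxS, hg x hxS⟩)
      fun x _ _ => hp x
  refine ⟨z, ?_⟩
  rw [← div_le_iff₀' hC]
  exact hz.trans hfiber

variable [Fintype V]

noncomputable def expectedError (p f : V → ℝ) : ℝ :=
  ∑ x, p x * |(∑ y, f y) / Fintype.card V - f x|

lemma mul_sum_le_expectedError {p f : V → ℝ} (hp : ∀ x, 0 ≤ p x) {T : Finset V} {a : ℝ}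
    (ha : ∀ x ∈ T, a ≤ |(∑ y, f y) / Fintype.card V - f x|) :
    a * ∑ x ∈ T, p x ≤ expectedError p f := by
  rw [mul_sum]
  calc ∑ x ∈ T, a * p x ≤ ∑ x ∈ T, p x * |(∑ y, f y) / Fintype.card V - f x| :=
        sum_le_sum fun x hx => by rw [mul_comm]; exact mul_le_mul_of_nonneg_left (ha x hx) (hp x)
    _ ≤ expectedError p f :=
        sum_le_sum_of_subset_of_nonneg (subset_univ T) fun x _ _ =>
          mul_nonneg (hp x) (abs_nonneg _)

variable [PseudoMetricSpace V] {p : V → ℝ}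

lemma dist_le_of_mem_filter_dist_le {o : V} {r : ℝ} :
    ∀ x ∈ ({x | dist o x ≤ r} : Finset V), ∀ y ∈ ({x | dist o x ≤ r} : Finset V),
      dist x y ≤ 2 * r := by
  simp only [mem_filter, mem_univ, true_and]
  intro x hx y hy
  linarith [dist_triangle_left x y o]

lemma two_mul_sum_far_le_expectedError_dist (hp : ∀ x, 0 ≤ p x) {o : V} {m : ℝ}
    (hm : m = (∑ x, dist o x) / Fintype.card V) :
    2 * m * ∑ x with 3 * m < dist o x, p x ≤ expectedError p (dist o) :=
  mul_sum_le_expectedError hp fun x hx => by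
    have hx : 3 * m < dist o x := (mem_filter.1 hx).2
    rw [← hm]
    exact (by linarith : 2 * m ≤ -(m - dist o x)).trans (neg_le_abs _)

lemma half_mul_sum_le_expectedError_dist (hp : ∀ x, 0 ≤ p x) {z : V} {m : ℝ}
    (hz : m ≤ (∑ y, dist z y) / Fintype.card V) {T : Finset V}
    (hT : ∀ x ∈ T, dist x z ≤ m / 2) :
    m / 2 * ∑ x ∈ T, p x ≤ expectedError p (dist z) :=
  mul_sum_le_expectedError hp fun x hx => by
    have hx : dist z x ≤ m / 2 := dist_comm z x ▸ hT x hx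
    exact (by linarith : m / 2 ≤ (∑ y, dist z y) / Fintype.card V - dist z x).trans
      (le_abs_self _)

lemma exists_mul_sum_le_mul_expectedError_dist [DecidableEq V] (hp : ∀ x, 0 ≤ p x)
    {S C : Finset V} {m c : ℝ} (hS : S.Nonempty) (hC : (#C : ℝ) ≤ c)
    (hcover : ∀ x ∈ S, ∃ z ∈ C, dist x z ≤ m / 2)
    (hmed : ∀ z : V, m ≤ (∑ y, dist z y) / Fintype.card V) :
    ∃ z, m / 2 * ∑ x ∈ S, p x ≤ c * expectedError p (dist z) := by
  obtain ⟨z, hz⟩ := exists_sum_le_card_mul_sum_dist_le hp hS hcover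
  have hm : 0 ≤ m / 2 := by
    obtain ⟨x, hx⟩ := hS
    obtain ⟨y, -, hxy⟩ := hcover x hx
    exact dist_nonneg.trans hxy
  set w := ∑ x ∈ S with dist x z ≤ m / 2, p x
  have hw : 0 ≤ w := sum_nonneg fun x _ => hp x
  have hE : m / 2 * w ≤ expectedError p (dist z) :=
    half_mul_sum_le_expectedError_dist hp (hmed z) fun x hx => (mem_filter.1 hx).2
  refine ⟨z, ?_⟩
  calc m / 2 * ∑ x ∈ S, p x ≤ #C * (m / 2 * w) := by rw [mul_left_comm]; gcongr
    _ ≤ #C * expectedError p (dist z) := by gcongr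
    _ ≤ c * expectedError p (dist z) := by gcongr; exact (mul_nonneg hm hw).trans hE

end

theorem stmt_1_general {V : Type*} [MetricSpace V] [Fintype V]
    (β : ℝ) (hβ : 0 < β)
    (hdouble : ∀ D : ℝ, 0 < D → ∀ S : Finset V,
      (∀ x ∈ S, ∀ y ∈ S, dist x y ≤ D) →
      ∃ C : Finset V, (C.card : ℝ) ≤ (6 : ℝ) ^ β ∧
        ∀ x ∈ S, ∃ z ∈ C, dist x z ≤ D / 6 / 2)
    (o : V) (ho : ∀ z : V, ∑ x, dist o x ≤ ∑ x, dist z x)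
    (m : ℝ) (hm : m = (∑ x, dist o x) / (Fintype.card V : ℝ))
    (p : V → ℝ) (hp_nonneg : ∀ x, 0 ≤ p x) (hp_sum : ∑ x, p x = 1) :
    ∃ f : V → ℝ, (∀ x y, |f x - f y| ≤ dist x y) ∧
      m / (4 * (6 : ℝ) ^ β) ≤
        ∑ x, p x * |(∑ y, f y) / (Fintype.card V : ℝ) - f x| := by
  set c : ℝ := 6 ^ β
  have hc : 1 ≤ c := Real.one_le_rpow (by norm_num) hβ.le
  have hlip (z x y : V) : |dist z x - dist z y| ≤ dist x y := by
    simpa only [dist_comm] using abs_dist_sub_le x y z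
  rcases (show 0 ≤ m by rw [hm]; positivity).eq_or_lt with hm0 | hm_pos
  · exact ⟨0, by simp, by simp [← hm0]⟩
  set q := ∑ x with 3 * m < dist o x, p x
  by_cases hq : 1 / (8 * c) ≤ q
  · refine ⟨dist o, hlip o, ?_⟩
    calc m / (4 * c) = 2 * m * (1 / (8 * c)) := by field_simp; ring
      _ ≤ 2 * m * q := by gcongr
      _ ≤ _ := two_mul_sum_far_le_expectedError_dist hp_nonneg hm
  set S : Finset V := {x | dist o x ≤ 3 * m}
  have hS : ∑ x ∈ S, p x = 1 - q := by
    rw [← hp_sum, ← sum_filter_add_sum_filter_not univ (fun x => dist o x ≤ 3 * m)]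
    simp [S, q]
  obtain ⟨C, hCc, hcover⟩ := hdouble (2 * (3 * m)) (by positivity) S
    dist_le_of_mem_filter_dist_le
  rw [show 2 * (3 * m) / 6 / 2 = m / 2 by ring] at hcover
  classical
  obtain ⟨z, hz⟩ := exists_mul_sum_le_mul_expectedError_dist hp_nonneg
    ⟨o, by simp [S]; positivity⟩ hCc hcover
    fun z => hm ▸ div_le_div_of_nonneg_right (ho z) (Nat.cast_nonneg _)
  refine ⟨dist z, hlip z, ?_⟩
  have hq8 : q ≤ 1 / 8 :=
    (not_le.1 hq).le.trans (one_div_le_one_div_of_le (by norm_num) (by linarith))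
  rw [hS] at hz
  change m / (4 * c) ≤ expectedError p (dist z)
  rw [div_le_iff₀ (by positivity)]
  nlinarith [mul_le_mul_of_nonneg_left hq8 hm_pos.le]

/-- In a finite metric space of diameter 1 with doubling exponent β
(every subset of diameter D can be covered by at most 6^β balls of diameter D/6),
with 1-median o and median value m, every probability distribution p admits a
1-Lipschitz function whose expected estimation error is at least m/(4·6^β). -/
theorem stmt_1 {V : Type*} [MetricSpace V] [Fintype V] [Nonempty V]
    (hdiam_le : ∀ x y : V, dist x y ≤ 1) (hdiam_eq : ∃ x y : V, dist x y = 1)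
    (β : ℝ) (hβ : 0 < β)
    (hdouble : ∀ D : ℝ, 0 < D → ∀ S : Finset V,
      (∀ x ∈ S, ∀ y ∈ S, dist x y ≤ D) →
      ∃ C : Finset V, (C.card : ℝ) ≤ (6 : ℝ) ^ β ∧
        ∀ x ∈ S, ∃ z ∈ C, dist x z ≤ D / 6 / 2)
    (o : V) (ho : ∀ z : V, ∑ x, dist o x ≤ ∑ x, dist z x)
    (m : ℝ) (hm : m = (∑ x, dist o x) / (Fintype.card V : ℝ))
    (p : V → ℝ) (hp_nonneg : ∀ x, 0 ≤ p x) (hp_sum : ∑ x, p x = 1) :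
    ∃ f : V → ℝ, (∀ x y, |f x - f y| ≤ dist x y) ∧
      m / (4 * (6 : ℝ) ^ β) ≤
        ∑ x, p x * |(∑ y, f y) / (Fintype.card V : ℝ) - f x| :=
  stmt_1_general β hβ hdouble o ho m hm p hp_nonneg hp_sum
end

section
/- Let (V,d) be a finite metric space with maximum pairwise distance 1, let 0 < δ ≤ 1, and let Q be a nonempty set of functions V → ℝ satisfying: (i) for every 1-Lipschitz f : V → ℝ there is f' ∈ Q such that |Err(p,f') − Err(p,f)| ≤ (δ/2)·MaxErr(p) for every probability distribution p on V, and (ii) for every f ∈ Q there is a 1-Lipschitz f' : V → ℝ such that |Err(p,f') − Err(p,f)| ≤ (δ/2)·MaxErr(p) for every probability distribution p on V. Suppose the probability distribution p minimizes MaxErr over all probability distributions on V, and the probability distribution q minimizes MaxErrQ over all probability distributions on V, where MaxErrQ(p') = sup_{f∈Q} Err(p',f). Then MaxErr(q) ≤ (1 + 2δ)·MaxErr(p). -/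
/-- A function on a metric space is 1-Lipschitz. -/
def IsLip {V : Type*} [MetricSpace V] (f : V → ℝ) : Prop :=
  ∀ x y, |f x - f y| ≤ dist x y

/-- A probability distribution on a finite type. -/
def IsProb {V : Type*} [Fintype V] (p : V → ℝ) : Prop :=
  (∀ x, 0 ≤ p x) ∧ ∑ x, p x = 1

/-- Average of a function over a finite type. -/
noncomputable def avgFn {V : Type*} [Fintype V] (f : V → ℝ) : ℝ :=
  (∑ x, f x) / (Fintype.card V : ℝ)

/-- Expected estimation error of sampling according to p against input f. -/
noncomputable def errFn {V : Type*} [Fintype V] (p f : V → ℝ) : ℝ :=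
  ∑ x, p x * |avgFn f - f x|

/-- Worst-case error of p against 1-Lipschitz functions. -/
noncomputable def maxErr {V : Type*} [MetricSpace V] [Fintype V] (p : V → ℝ) : ℝ :=
  sSup (errFn p '' {f | IsLip f})

/-- Worst-case error of p against functions from a class Q. -/
noncomputable def maxErrQ {V : Type*} [Fintype V] (Q : Set (V → ℝ)) (p : V → ℝ) : ℝ :=
  sSup (errFn p '' Q)

lemma errFn_nonneg {V : Type*} [Fintype V] {p : V → ℝ} (hp : IsProb p) (f : V → ℝ) :
    0 ≤ errFn p f :=
  Finset.sum_nonneg fun x _ => mul_nonneg (hp.1 x) (abs_nonneg _)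

section

variable {V : Type*} [MetricSpace V] [Fintype V] {p f : V → ℝ} {D ε : ℝ}

lemma abs_avgFn_sub_le (hD : ∀ x y : V, dist x y ≤ D) (hf : IsLip f) (x : V) :
    |avgFn f - f x| ≤ D := by
  have hn : (0 : ℝ) < Fintype.card V := by
    have : Nonempty V := ⟨x⟩
    exact_mod_cast Fintype.card_pos
  have hsum : avgFn f - f x = (∑ y, (f y - f x)) / Fintype.card V := by
    rw [avgFn, Finset.sum_sub_distrib, Finset.sum_const, Finset.card_univ, nsmul_eq_mul]
    field_simp
  rw [hsum, abs_div, abs_of_pos hn, div_le_iff₀ hn]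
  calc |∑ y, (f y - f x)| ≤ ∑ y, |f y - f x| := Finset.abs_sum_le_sum_abs _ _
    _ ≤ ∑ _y : V, D := Finset.sum_le_sum fun y _ => (hf y x).trans (hD y x)
    _ = D * Fintype.card V := by simp [mul_comm]

lemma errFn_le (hD : ∀ x y : V, dist x y ≤ D) (hp : IsProb p) (hf : IsLip f) :
    errFn p f ≤ D :=
  calc errFn p f ≤ ∑ x, p x * D :=
        Finset.sum_le_sum fun x _ => mul_le_mul_of_nonneg_left (abs_avgFn_sub_le hD hf x) (hp.1 x)
    _ = D := by rw [← Finset.sum_mul, hp.2, one_mul]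

lemma bddAbove_errFn_image_isLip (hp : IsProb p) : BddAbove (errFn p '' {f | IsLip f}) := by
  refine ⟨Metric.diam (Set.univ : Set V), ?_⟩
  rintro _ ⟨f, hf, rfl⟩
  exact errFn_le (fun x y => Metric.dist_le_diam_of_mem Set.finite_univ.isBounded
    (Set.mem_univ x) (Set.mem_univ y)) hp hf

lemma errFn_le_maxErr (hp : IsProb p) (hf : IsLip f) : errFn p f ≤ maxErr p :=
  le_csSup (bddAbove_errFn_image_isLip hp) ⟨f, hf, rfl⟩

lemma maxErr_nonneg (hp : IsProb p) : 0 ≤ maxErr p :=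
  Real.sSup_nonneg <| by rintro _ ⟨f, -, rfl⟩; exact errFn_nonneg hp f

variable {Q : Set (V → ℝ)}

lemma maxErrQ_le_maxErr_add (hp : IsProb p) (hε : 0 ≤ ε)
    (hQ : ∀ g ∈ Q, ∃ g', IsLip g' ∧ |errFn p g' - errFn p g| ≤ ε) :
    maxErrQ Q p ≤ maxErr p + ε := by
  refine Real.sSup_le ?_ (add_nonneg (maxErr_nonneg hp) hε)
  rintro _ ⟨g, hg, rfl⟩
  obtain ⟨g', hg', hclose⟩ := hQ g hg
  linarith [(abs_le.mp hclose).1, errFn_le_maxErr hp hg']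

lemma bddAbove_errFn_image_of_approx (hp : IsProb p)
    (hQ : ∀ g ∈ Q, ∃ g', IsLip g' ∧ |errFn p g' - errFn p g| ≤ ε) :
    BddAbove (errFn p '' Q) := by
  refine ⟨maxErr p + ε, ?_⟩
  rintro _ ⟨g, hg, rfl⟩
  obtain ⟨g', hg', hclose⟩ := hQ g hg
  linarith [(abs_le.mp hclose).1, errFn_le_maxErr hp hg']

lemma maxErr_le_maxErrQ_add (hQ : BddAbove (errFn p '' Q))
    (hLip : ∀ f, IsLip f → ∃ f' ∈ Q, |errFn p f' - errFn p f| ≤ ε) :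
    maxErr p ≤ maxErrQ Q p + ε := by
  have hzero : IsLip (0 : V → ℝ) := fun x y => by simp
  refine csSup_le ⟨_, 0, hzero, rfl⟩ ?_
  rintro _ ⟨f, hf, rfl⟩
  obtain ⟨f', hf', hclose⟩ := hLip f hf
  have hf'_le : errFn p f' ≤ maxErrQ Q p := le_csSup hQ ⟨f', hf', rfl⟩
  linarith [(abs_le.mp hclose).1]

end

theorem stmt_2_general {V : Type*} [MetricSpace V] [Fintype V]
    (δ : ℝ) (hδ0 : 0 < δ) (hδ1 : δ ≤ 1)
    (Q : Set (V → ℝ))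
    (happrox₁ : ∀ f : V → ℝ, IsLip f → ∃ f' ∈ Q,
      ∀ p : V → ℝ, IsProb p → |errFn p f' - errFn p f| ≤ δ / 2 * maxErr p)
    (happrox₂ : ∀ f ∈ Q, ∃ f' : V → ℝ, IsLip f' ∧
      ∀ p : V → ℝ, IsProb p → |errFn p f' - errFn p f| ≤ δ / 2 * maxErr p)
    (p q : V → ℝ) (hp : IsProb p) (hq : IsProb q)
    (hq_min : ∀ p' : V → ℝ, IsProb p' → maxErrQ Q q ≤ maxErrQ Q p') :
    maxErr q ≤ (1 + 2 * δ) * maxErr p := by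
  have approx₁ (r : V → ℝ) (hr : IsProb r) (f : V → ℝ) (hf : IsLip f) :
      ∃ f' ∈ Q, |errFn r f' - errFn r f| ≤ δ / 2 * maxErr r :=
    (happrox₁ f hf).imp fun _ h => ⟨h.1, h.2 r hr⟩
  have approx₂ (r : V → ℝ) (hr : IsProb r) (g : V → ℝ) (hg : g ∈ Q) :
      ∃ g', IsLip g' ∧ |errFn r g' - errFn r g| ≤ δ / 2 * maxErr r :=
    (happrox₂ g hg).imp fun _ h => ⟨h.1, h.2 r hr⟩
  have hq_le : maxErr q ≤ maxErrQ Q q + δ / 2 * maxErr q :=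
    maxErr_le_maxErrQ_add (bddAbove_errFn_image_of_approx hq (approx₂ q hq)) (approx₁ q hq)
  have hQp_le : maxErrQ Q p ≤ maxErr p + δ / 2 * maxErr p :=
    maxErrQ_le_maxErr_add hp (by have := maxErr_nonneg hp; positivity) (approx₂ p hp)
  -- with `hq_min p hp`: (1 - δ/2) maxErr q ≤ (1 + δ/2) maxErr p, and (1 + δ/2)/(1 - δ/2) ≤ 1 + 2δ for δ ≤ 1
  nlinarith [hq_min p hp, maxErr_nonneg hp, maxErr_nonneg hq,
    mul_nonneg (maxErr_nonneg hp) (mul_nonneg hδ0.le (sub_nonneg.mpr hδ1))]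

/-- If Q δ-approximates the class of 1-Lipschitz functions, then the
optimizer of the discretized problem is a (1+2δ)-approximation to the optimizer of
the exact problem. -/
theorem stmt_2 {V : Type*} [MetricSpace V] [Fintype V] [Nonempty V]
    (hdiam_le : ∀ x y : V, dist x y ≤ 1) (hdiam_eq : ∃ x y : V, dist x y = 1)
    (δ : ℝ) (hδ0 : 0 < δ) (hδ1 : δ ≤ 1)
    (Q : Set (V → ℝ)) (hQ : Q.Nonempty)
    (happrox₁ : ∀ f : V → ℝ, IsLip f → ∃ f' ∈ Q,
      ∀ p : V → ℝ, IsProb p → |errFn p f' - errFn p f| ≤ δ / 2 * maxErr p)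
    (happrox₂ : ∀ f ∈ Q, ∃ f' : V → ℝ, IsLip f' ∧
      ∀ p : V → ℝ, IsProb p → |errFn p f' - errFn p f| ≤ δ / 2 * maxErr p)
    (p q : V → ℝ) (hp : IsProb p) (hq : IsProb q)
    (hp_min : ∀ p' : V → ℝ, IsProb p' → maxErr p ≤ maxErr p')
    (hq_min : ∀ p' : V → ℝ, IsProb p' → maxErrQ Q q ≤ maxErrQ Q p') :
    maxErr q ≤ (1 + 2 * δ) * maxErr p :=
  stmt_2_general δ hδ0 hδ1 Q happrox₁ happrox₂ p q hp hq hq_min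
end

section
/- Let (V,d) be a finite metric space, let s : V → ℝ with s(x) ≥ 0 for all x, and let f : V → ℝ satisfy the relaxed Lipschitz condition |f(x) − f(y)| ≤ d(x,y) + s(x) + s(y) for all x, y ∈ V. Then there exists a function f' : V → ℝ such that |f'(x) − f'(y)| ≤ d(x,y) for all x, y ∈ V, and |f(x) − f'(x)| ≤ s(x) for all x ∈ V. -/
/-!
Take for `f'` the inf-convolution `x ↦ inf_y (f y + s y + d(x, y))`, the largest 1-Lipschitz
function below `f + s`. The relaxed Lipschitz condition says exactly that `f - s` is a lower bound
for each `f y + s y + d(·, y)`, so `f - s ≤ f' ≤ f + s`.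
-/

open Set

section DistInfConv

variable {X : Type*} [PseudoMetricSpace X] {g h : X → ℝ}

noncomputable def distInfConv (g : X → ℝ) (x : X) : ℝ := ⨅ y, g y + dist x y

variable (hgh : ∀ x y, h x ≤ g y + dist x y)
include hgh

theorem bddBelow_range_add_dist (x : X) : BddBelow (range fun y => g y + dist x y) :=
  ⟨h x, by rintro _ ⟨y, rfl⟩; exact hgh x y⟩

theorem distInfConv_le (x y : X) : distInfConv g x ≤ g y + dist x y :=
  ciInf_le (bddBelow_range_add_dist hgh x) y

theorem le_distInfConv (x : X) : h x ≤ distInfConv g x :=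
  have : Nonempty X := ⟨x⟩
  le_ciInf (hgh x)

theorem lipschitzWith_distInfConv : LipschitzWith 1 (distInfConv g) := by
  refine LipschitzWith.of_le_add fun x y => ?_
  have : Nonempty X := ⟨x⟩
  rw [← sub_le_iff_le_add]
  refine le_ciInf fun z => ?_
  calc distInfConv g x - dist x y ≤ g z + dist x z - dist x y := by
        gcongr; exact distInfConv_le hgh x z
    _ ≤ g z + dist y z := by linarith [dist_triangle x y z]

end DistInfConv

theorem stmt_3_general {V : Type*} [MetricSpace V]
    (s : V → ℝ)
    (f : V → ℝ) (hf : ∀ x y, |f x - f y| ≤ dist x y + s x + s y) :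
    ∃ f' : V → ℝ, (∀ x y, |f' x - f' y| ≤ dist x y) ∧
      ∀ x, |f x - f' x| ≤ s x := by
  have hgh : ∀ x y, f x - s x ≤ (f + s) y + dist x y := fun x y => by
    linarith [le_abs_self (f x - f y), hf x y, Pi.add_apply f s y]
  refine ⟨distInfConv (f + s), fun x y => ?_, fun x => abs_le.mpr ⟨?_, ?_⟩⟩
  · simpa [Real.dist_eq] using (lipschitzWith_distInfConv hgh).dist_le_mul x y
  · linarith [distInfConv_le hgh x x, dist_self x, Pi.add_apply f s x]
  · linarith [le_distInfConv hgh x]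

/-- Any function on a finite metric space satisfying the relaxed
Lipschitz condition |f(x) − f(y)| ≤ d(x,y) + s(x) + s(y) can be adjusted by at
most s(x) at each point x to obtain a 1-Lipschitz function. -/
theorem stmt_3 {V : Type*} [MetricSpace V] [Fintype V]
    (s : V → ℝ) (hs : ∀ x, 0 ≤ s x)
    (f : V → ℝ) (hf : ∀ x y, |f x - f y| ≤ dist x y + s x + s y) :
    ∃ f' : V → ℝ, (∀ x y, |f' x - f' y| ≤ dist x y) ∧
      ∀ x, |f x - f' x| ≤ s x :=
  stmt_3_general s f hf
end

section
/- Let 0 = x₁ ≤ x₂ ≤ … ≤ x_n = 1 be points in [0,1] and let γ > 0. For every function h ∈ Q_γ there exists a function f : {x₁,…,x_n} → ℝ satisfying |f(x_i) − f(x_j)| ≤ |x_i − x_j| for all i,j and Σ_{i=1}^n f(x_i) = 0, such that |Err(p,h) − Err(p,f)| ≤ 6γ for every probability distribution p on {x₁,…,x_n}. -/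
/-!
The function `g i = min_j (h j + |x i - x j|)` is the largest 1-Lipschitz minorant of `h`, and the
relaxed Lipschitz condition on `h` gives `h - γ ≤ g ≤ h`. Subtracting its mean (which is at most `2γ`
in absolute value, since the mean of `h` is at most `γ`) makes `g` mean-zero, and then each term
`|Avg h - h i|` moves by at most `γ + γ + 2γ`, so any `p`-weighted average of them moves by at
most `4γ`.
-/

open Finset

section LowerLipschitzEnvelope

variable {ι α : Type*} [Fintype ι] [Nonempty ι] [PseudoMetricSpace α]

noncomputable def lowerLipschitzEnvelope (x : ι → α) (h : ι → ℝ) (i : ι) : ℝ :=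
  univ.inf' univ_nonempty fun j => h j + dist (x i) (x j)

variable (x : ι → α) (h : ι → ℝ)

theorem lowerLipschitzEnvelope_le_add (i j : ι) :
    lowerLipschitzEnvelope x h i ≤ h j + dist (x i) (x j) :=
  inf'_le _ (mem_univ j)

theorem le_lowerLipschitzEnvelope {a : ℝ} {i : ι} (ha : ∀ j, a ≤ h j + dist (x i) (x j)) :
    a ≤ lowerLipschitzEnvelope x h i :=
  le_inf' _ _ fun j _ => ha j

theorem lowerLipschitzEnvelope_le (i : ι) : lowerLipschitzEnvelope x h i ≤ h i := by
  simpa using lowerLipschitzEnvelope_le_add x h i i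

theorem sub_le_lowerLipschitzEnvelope {γ : ℝ} (hh : ∀ i j, h i - h j ≤ dist (x i) (x j) + γ)
    (i : ι) : h i - γ ≤ lowerLipschitzEnvelope x h i :=
  le_lowerLipschitzEnvelope x h fun j => by linarith [hh i j]

theorem lowerLipschitzEnvelope_sub_le (i k : ι) :
    lowerLipschitzEnvelope x h i - lowerLipschitzEnvelope x h k ≤ dist (x i) (x k) := by
  have : lowerLipschitzEnvelope x h i - dist (x i) (x k) ≤ lowerLipschitzEnvelope x h k :=
    le_lowerLipschitzEnvelope x h fun j => by
      linarith [lowerLipschitzEnvelope_le_add x h i j, dist_triangle (x i) (x k) (x j)]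
  linarith

theorem abs_lowerLipschitzEnvelope_sub_le (i k : ι) :
    |lowerLipschitzEnvelope x h i - lowerLipschitzEnvelope x h k| ≤ dist (x i) (x k) :=
  abs_sub_le_iff.2 ⟨lowerLipschitzEnvelope_sub_le x h i k,
    dist_comm (x i) (x k) ▸ lowerLipschitzEnvelope_sub_le x h k i⟩

theorem abs_lowerLipschitzEnvelope_sub_self_le {γ : ℝ}
    (hh : ∀ i j, |h i - h j| ≤ dist (x i) (x j) + γ) (i : ι) :
    |lowerLipschitzEnvelope x h i - h i| ≤ γ := by
  have hγ : 0 ≤ γ := by simpa using hh i i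
  have hlower := sub_le_lowerLipschitzEnvelope x h (fun i j => (le_abs_self _).trans (hh i j)) i
  exact abs_sub_le_iff.2 ⟨by linarith [lowerLipschitzEnvelope_le x h i], by linarith⟩

end LowerLipschitzEnvelope

section Averages

variable {ι : Type*} [Fintype ι]

theorem abs_weightedSum_sub_weightedSum_le {p u v : ι → ℝ} {ε : ℝ} (hp : ∀ i, 0 ≤ p i)
    (hp1 : ∑ i, p i = 1) (huv : ∀ i, |u i - v i| ≤ ε) :
    |∑ i, p i * u i - ∑ i, p i * v i| ≤ ε :=
  calc |∑ i, p i * u i - ∑ i, p i * v i| = |∑ i, p i * (u i - v i)| := by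
        simp only [mul_sub, sum_sub_distrib]
    _ ≤ ∑ i, |p i * (u i - v i)| := abs_sum_le_sum_abs _ _
    _ ≤ ∑ i, p i * ε := sum_le_sum fun i _ => by
        rw [abs_mul, abs_of_nonneg (hp i)]
        exact mul_le_mul_of_nonneg_left (huv i) (hp i)
    _ = ε := by rw [← sum_mul, hp1, one_mul]

theorem abs_weightedDeviation_sub_weightedDeviation_le {p u v : ι → ℝ} {ε : ℝ} (a b : ℝ)
    (hp : ∀ i, 0 ≤ p i) (hp1 : ∑ i, p i = 1) (huv : ∀ i, |u i - v i| ≤ ε) :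
    |(∑ i, p i * |a - u i|) - (∑ i, p i * |b - v i|)| ≤ |a - b| + ε :=
  abs_weightedSum_sub_weightedSum_le hp hp1 fun i =>
    calc _ ≤ |(a - u i) - (b - v i)| := abs_abs_sub_abs_le_abs_sub _ _
      _ = |(a - b) - (u i - v i)| := by congr 1; ring
      _ ≤ |a - b| + |u i - v i| := abs_sub _ _
      _ ≤ |a - b| + ε := by linarith [huv i]

theorem abs_sum_sub_sum_le {g h : ι → ℝ} {γ : ℝ} (hgh : ∀ i, |g i - h i| ≤ γ) :
    |∑ i, g i - ∑ i, h i| ≤ Fintype.card ι * γ :=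
  calc |∑ i, g i - ∑ i, h i| ≤ ∑ i, |g i - h i| := by
        rw [← sum_sub_distrib]; exact abs_sum_le_sum_abs _ _
    _ ≤ ∑ _i : ι, γ := sum_le_sum fun i _ => hgh i
    _ = Fintype.card ι * γ := by simp

theorem sum_sub_mean_eq_zero [Nonempty ι] (g : ι → ℝ) :
    ∑ i, (g i - (∑ j, g j) / Fintype.card ι) = 0 := by
  rw [sum_sub_distrib, sum_const, card_univ, nsmul_eq_mul,
    mul_div_cancel₀ _ (Nat.cast_ne_zero.2 Fintype.card_ne_zero), sub_self]

theorem abs_div_natCast_le {s C : ℝ} {n : ℕ} (hn : 0 < n) (hs : |s| ≤ n * C) : |s / n| ≤ C := by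
  have hnR : (0 : ℝ) < n := Nat.cast_pos.2 hn
  rwa [abs_div, abs_of_pos hnR, div_le_iff₀' hnR]

end Averages

theorem stmt_5_general (n : ℕ) (hn : 0 < n) (x : Fin n → ℝ)
    (γ : ℝ)
    (h : Fin n → ℝ)
    (hrelax : ∀ i j, |h i - h j| ≤ |x i - x j| + γ)
    (hsum : |∑ i, h i| ≤ n * γ) :
    ∃ f : Fin n → ℝ,
      (∀ i j, |f i - f j| ≤ |x i - x j|) ∧
      (∑ i, f i = 0) ∧
      ∀ p : Fin n → ℝ, (∀ i, 0 ≤ p i) → (∑ i, p i = 1) →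
        |(∑ i, p i * |(∑ j, h j) / (n : ℝ) - h i|) -
         (∑ i, p i * |(∑ j, f j) / (n : ℝ) - f i|)| ≤ 6 * γ := by
  have : Nonempty (Fin n) := ⟨⟨0, hn⟩⟩
  set g := lowerLipschitzEnvelope x h
  have hgh : ∀ i, |g i - h i| ≤ γ := abs_lowerLipschitzEnvelope_sub_self_le x h hrelax
  have hγ : 0 ≤ γ := (abs_nonneg _).trans (hgh ⟨0, hn⟩)
  set c := (∑ j, g j) / n
  have hf : ∑ i, (g i - c) = 0 := by simpa using sum_sub_mean_eq_zero g
  have hmean_h : |(∑ j, h j) / n| ≤ γ := abs_div_natCast_le hn hsum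
  have hmean_g : |c| ≤ 2 * γ := abs_div_natCast_le hn <| by
    have hsum_gh := abs_sum_sub_sum_le hgh
    rw [Fintype.card_fin] at hsum_gh
    linarith [abs_sub_abs_le_abs_sub (∑ j, g j) (∑ j, h j)]
  refine ⟨fun i => g i - c, fun i j => ?_, hf, fun p hp hp1 => ?_⟩
  · rw [sub_sub_sub_cancel_right, ← Real.dist_eq]
    exact abs_lowerLipschitzEnvelope_sub_le x h i j
  have hhg : ∀ i, |h i - (g i - c)| ≤ 3 * γ := fun i => by
    rw [show h i - (g i - c) = (h i - g i) + c by ring]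
    linarith [abs_add_le (h i - g i) c, abs_sub_comm (h i) (g i), hgh i]
  rw [hf, zero_div]
  refine (abs_weightedDeviation_sub_weightedDeviation_le _ _ hp hp1 hhg).trans ?_
  rw [sub_zero]
  linarith

/-- Every function in the discretized class Q_γ on points
0 = x₁ ≤ … ≤ x_n = 1 on the line is within additive error 6γ (in expected
estimation error, against every sampling distribution) of some 1-Lipschitz
mean-zero function. -/
theorem stmt_5 (n : ℕ) (hn : 0 < n) (x : Fin n → ℝ) (hmono : Monotone x)
    (hfirst : x ⟨0, hn⟩ = 0) (hlast : x ⟨n - 1, Nat.sub_lt hn Nat.one_pos⟩ = 1)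
    (γ : ℝ) (hγ : 0 < γ)
    (h : Fin n → ℝ)
    (hmult : ∀ i, ∃ k : ℤ, h i = k * γ)
    (hrelax : ∀ i j, |h i - h j| ≤ |x i - x j| + γ)
    (hsum : |∑ i, h i| ≤ n * γ) :
    ∃ f : Fin n → ℝ,
      (∀ i j, |f i - f j| ≤ |x i - x j|) ∧
      (∑ i, f i = 0) ∧
      ∀ p : Fin n → ℝ, (∀ i, 0 ≤ p i) → (∑ i, p i = 1) →
        |(∑ i, p i * |(∑ j, h j) / (n : ℝ) - h i|) -
         (∑ i, p i * |(∑ j, f j) / (n : ℝ) - f i|)| ≤ 6 * γ :=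
  stmt_5_general n hn x γ h hrelax hsum
end

section
/- For every probability measure μ on [0,1] there exists a function f ∈ L₀ (i.e., f : [0,1] → ℝ 1-Lipschitz with ∫₀¹ f(x) dx = 0) such that ∫₀¹ |f(x)| dμ(x) ≥ 1 − √3/2. (That is, no randomized sampling distribution that outputs the observed value can achieve worst-case expected error below 1 − √3/2.) -/
open MeasureTheory

/-!
With `c = 2 - √3`, the function `x ↦ |x - t| - c` is 1-Lipschitz and has mean zero on `[0, 1]`
exactly when `t² - t + 1/2 = c`, which holds for `t = a = (√3 - 1)/2` and for `t = a + c = 1 - a`.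
Two V-shapes whose vertices are `c` apart satisfy `|f_a| + |f_{a+c}| ≥ c` everywhere, so under any
probability measure one of them has expected absolute value at least `c / 2 = 1 - √3 / 2`.
-/

lemma abs_abs_sub_sub_sub_le (t c x y : ℝ) : |(|x - t| - c) - (|y - t| - c)| ≤ |x - y| := by
  rw [sub_sub_sub_cancel_right]
  simpa using abs_abs_sub_abs_le_abs_sub (x - t) (y - t)

lemma integral_abs_sub_of_le_of_le {u v a : ℝ} (hua : u ≤ a) (hav : a ≤ v) :
    ∫ x in u..v, |x - a| = ((a - u) ^ 2 + (v - a) ^ 2) / 2 := by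
  have hint : ∀ p q : ℝ, IntervalIntegrable (fun x : ℝ => |x|) volume p q := fun p q =>
    continuous_abs.intervalIntegrable p q
  rw [intervalIntegral.integral_comp_sub_right (fun x => |x|),
    ← intervalIntegral.integral_add_adjacent_intervals (hint _ 0) (hint 0 _)]
  have hneg : ∫ x in u - a..0, |x| = ∫ x in u - a..0, -x := by
    refine intervalIntegral.integral_congr fun x hx => abs_of_nonpos ?_
    rw [Set.uIcc_of_le (by linarith)] at hx
    exact hx.2
  have hpos : ∫ x in (0 : ℝ)..v - a, |x| = ∫ x in (0 : ℝ)..v - a, x := by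
    refine intervalIntegral.integral_congr fun x hx => abs_of_nonneg ?_
    rw [Set.uIcc_of_le (by linarith)] at hx
    exact hx.1
  rw [hneg, hpos, intervalIntegral.integral_neg, integral_id, integral_id]
  ring

lemma exists_half_le_integral_of_le_add {α : Type*} [MeasurableSpace α] {ν : Measure α}
    [IsProbabilityMeasure ν] {g₁ g₂ : α → ℝ} {c : ℝ} (h₁ : Integrable g₁ ν) (h₂ : Integrable g₂ ν)
    (hc : ∀ᵐ x ∂ν, c ≤ g₁ x + g₂ x) : c / 2 ≤ ∫ x, g₁ x ∂ν ∨ c / 2 ≤ ∫ x, g₂ x ∂ν := by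
  have hsum : c ≤ ∫ x, g₁ x ∂ν + ∫ x, g₂ x ∂ν := by
    simpa [integral_add h₁ h₂] using integral_mono_ae (integrable_const c) (h₁.add h₂) hc
  by_contra! h
  linarith [h.1, h.2]

lemma le_abs_abs_sub_sub_add_abs_abs_sub_add_sub {c : ℝ} (hc : 0 ≤ c) (a x : ℝ) :
    c ≤ |(|x - a| - c)| + |(|x - (a + c)| - c)| := by
  rcases abs_cases (x - a) with ⟨h₁, h₁'⟩ | ⟨h₁, h₁'⟩ <;>
    rcases abs_cases (x - (a + c)) with ⟨h₂, h₂'⟩ | ⟨h₂, h₂'⟩ <;>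
      rcases abs_cases (|x - a| - c) with ⟨h₃, h₃'⟩ | ⟨h₃, h₃'⟩ <;>
        rcases abs_cases (|x - (a + c)| - c) with ⟨h₄, h₄'⟩ | ⟨h₄, h₄'⟩ <;>
          linarith

lemma intervalIntegral_abs_sub_sub_eq_zero {t c : ℝ} (ht₀ : 0 ≤ t) (ht₁ : t ≤ 1)
    (hc : t ^ 2 - t + 1 / 2 = c) : ∫ x in (0 : ℝ)..1, (|x - t| - c) = 0 := by
  have hcont : Continuous fun x : ℝ => |x - t| := by fun_prop
  rw [intervalIntegral.integral_sub (hcont.intervalIntegrable 0 1) intervalIntegrable_const,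
    integral_abs_sub_of_le_of_le ht₀ ht₁, intervalIntegral.integral_const, ← hc]
  simp only [smul_eq_mul]
  ring

/-- No randomized sampling distribution on [0,1] that outputs the
observed value achieves worst-case expected error below 1 − √3/2: for every
probability measure μ on [0,1] there is a mean-zero 1-Lipschitz function f with
∫ |f| dμ ≥ 1 − √3/2. -/
theorem stmt_7 (μ : Measure ℝ) [IsProbabilityMeasure μ]
    (hμ : μ (Set.Icc (0 : ℝ) 1) = 1) :
    ∃ f : ℝ → ℝ,
      (∀ x ∈ Set.Icc (0 : ℝ) 1, ∀ y ∈ Set.Icc (0 : ℝ) 1, |f x - f y| ≤ |x - y|) ∧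
      (∫ x in (0 : ℝ)..1, f x = 0) ∧
      1 - Real.sqrt 3 / 2 ≤ ∫ x in Set.Icc (0 : ℝ) 1, |f x| ∂μ := by
  have h3 : Real.sqrt 3 ^ 2 = 3 := Real.sq_sqrt (by norm_num)
  have h3l : 1 ≤ Real.sqrt 3 := by nlinarith [Real.sqrt_nonneg 3]
  have h3u : Real.sqrt 3 ≤ 2 := by nlinarith [Real.sqrt_nonneg 3]
  set a := (Real.sqrt 3 - 1) / 2 with ha_def
  set c := 2 - Real.sqrt 3 with hc_def
  have hc₀ : 0 ≤ c := by linarith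
  have hbound : 1 - Real.sqrt 3 / 2 = c / 2 := by ring
  have : IsProbabilityMeasure (μ.restrict (Set.Icc 0 1)) := ⟨by simp [hμ]⟩
  have hint (t : ℝ) : Integrable (fun x => |(|x - t| - c)|) (μ.restrict (Set.Icc 0 1)) :=
    (by fun_prop : Continuous _).integrableOn_Icc
  rcases exists_half_le_integral_of_le_add (hint a) (hint (a + c))
    (ae_of_all _ (le_abs_abs_sub_sub_add_abs_abs_sub_add_sub hc₀ a)) with h | h
  · refine ⟨fun x => |x - a| - c, fun x _ y _ => abs_abs_sub_sub_sub_le a c x y,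
      intervalIntegral_abs_sub_sub_eq_zero (by linarith) (by linarith) ?_, hbound ▸ h⟩
    linear_combination h3 / 4
  · refine ⟨fun x => |x - (a + c)| - c, fun x _ y _ => abs_abs_sub_sub_sub_le (a + c) c x y,
      intervalIntegral_abs_sub_sub_eq_zero (by linarith) (by linarith) ?_, hbound ▸ h⟩
    linear_combination h3 / 4
end

section
/- For every Borel probability measure μ on [0,1], every Borel measurable function g : [0,1] × ℝ → ℝ, and every ε > 0, there exists a 1-Lipschitz function f : [0,1] → ℝ such that ∫₀¹ |g(x, f(x)) − ∫₀¹ f(t) dt| dμ(x) ≥ 1 − √3/2 − ε, where the integral with respect to μ is the lower Lebesgue integral of the nonnegative integrand. (That is, even allowing arbitrary post-processing of the observed sample, no randomized single-sample algorithm achieves worst-case expected error below 1 − √3/2.) -/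
/-!
Yao's principle with a random shift. Let `a = (√3 - 1)/2` and `c = 2 - √3`, so that `a + c = 1 - a`
and the V-shapes `t ↦ ±|t - a|`, `t ↦ ±|t - (a + c)|` have means `±c` on `[0, 1]`. Shift each of
them by a constant `b` drawn uniformly from `(-M, M)`. After observing `w = f(x)` at a point `x`,
the four candidate means are `w ∓ (|x - a| - c)` and `w ∓ (|x - a - c| - c)`, and every prediction
misses them by at least `2c` in total. Because the shift makes `w` almost uniformly distributed
whichever function was chosen, the average error over the four functions and the shift is at least
`(2c / 4) (1 - 1/M)`, so some shifted V-shape incurs error close to `c / 2 = 1 - √3/2`.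
-/

open MeasureTheory Set
open scoped ENNReal

lemma integral_abs_sub_of_mem_Icc {a : ℝ} (ha : a ∈ Icc (0 : ℝ) 1) :
    ∫ t in (0 : ℝ)..1, |t - a| = a ^ 2 - a + 1 / 2 := by
  have hint : ∀ u v : ℝ, IntervalIntegrable (fun t => |t - a|) volume u v := fun u v =>
    (continuous_id.sub continuous_const).abs.intervalIntegrable u v
  have hleft : ∫ t in (0 : ℝ)..a, |t - a| = ∫ t in (0 : ℝ)..a, (a - t) := by
    refine intervalIntegral.integral_congr fun t ht => ?_
    rw [uIcc_of_le ha.1] at ht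
    simp only [abs_of_nonpos (sub_nonpos.2 ht.2), neg_sub]
  have hright : ∫ t in a..(1 : ℝ), |t - a| = ∫ t in a..(1 : ℝ), (t - a) := by
    refine intervalIntegral.integral_congr fun t ht => ?_
    rw [uIcc_of_le ha.2] at ht
    simp only [abs_of_nonneg (sub_nonneg.2 ht.1)]
  rw [← intervalIntegral.integral_add_adjacent_intervals (hint 0 a) (hint a 1), hleft, hright,
    intervalIntegral.integral_sub intervalIntegrable_const intervalIntegral.intervalIntegrable_id,
    intervalIntegral.integral_sub intervalIntegral.intervalIntegrable_id intervalIntegrable_const]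
  simp only [integral_id, intervalIntegral.integral_const, smul_eq_mul]
  ring

lemma integral_const_mul_abs_sub_add_const (s b : ℝ) {a : ℝ} (ha : a ∈ Icc (0 : ℝ) 1) :
    ∫ t in (0 : ℝ)..1, (s * |t - a| + b) = s * (a ^ 2 - a + 1 / 2) + b := by
  rw [intervalIntegral.integral_add _ intervalIntegrable_const, intervalIntegral.integral_const_mul,
    integral_abs_sub_of_mem_Icc ha]
  · simp
  · exact (continuous_const.mul (continuous_id.sub continuous_const).abs).intervalIntegrable 0 1

lemma lipschitzWith_const_mul_abs_sub_add_const {s : ℝ} (hs : |s| = 1) (a b : ℝ) :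
    LipschitzWith 1 fun t => s * |t - a| + b := by
  refine LipschitzWith.of_dist_le_mul fun x y => ?_
  rw [Real.dist_eq, Real.dist_eq, add_sub_add_right_eq_sub, ← mul_sub, abs_mul, hs, NNReal.coe_one,
    one_mul, one_mul]
  simpa using abs_abs_sub_abs_le_abs_sub (x - a) (y - a)

lemma two_mul_abs_le_abs_add_add_abs_sub (H t : ℝ) : 2 * |t| ≤ |H + t| + |H - t| :=
  calc 2 * |t| = |(H + t) - (H - t)| := by rw [add_sub_sub_cancel, ← two_mul, abs_mul, abs_two]
    _ ≤ |H + t| + |H - t| := abs_sub _ _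

lemma le_abs_abs_sub_add_abs_abs_sub_sub (c u : ℝ) : c ≤ |(|u| - c)| + |(|u - c| - c)| := by
  rcases abs_cases u with ⟨hu, -⟩ | ⟨hu, -⟩ <;>
    rcases abs_cases (u - c) with ⟨huc, -⟩ | ⟨huc, -⟩ <;> rw [hu, huc] <;>
    linarith [le_abs_self (u - c), neg_abs_le (u - c), le_abs_self (-u - c), neg_abs_le (-u - c),
      le_abs_self (u - c - c), neg_abs_le (u - c - c), le_abs_self (-(u - c) - c),
      neg_abs_le (-(u - c) - c)]

def boolSign : Bool → ℝ
  | true => 1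
  | false => -1

lemma abs_boolSign (σ : Bool) : |boolSign σ| = 1 := by
  cases σ <;> simp [boolSign]

lemma two_mul_le_sum_abs_add_boolSign_mul (a c x H : ℝ) :
    2 * c ≤ ∑ i : Bool × Bool,
      |H + (boolSign i.1 * |x - if i.2 then a else a + c| - boolSign i.1 * c)| := by
  have hgap : x - (a + c) = x - a - c := by ring
  simp only [← mul_sub, Fintype.sum_prod_type, Fintype.sum_bool, boolSign, if_true,
    Bool.false_eq_true, if_false, hgap, one_mul, neg_one_mul, ← sub_eq_add_neg]
  linarith [le_abs_abs_sub_add_abs_abs_sub_sub c (x - a),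
    two_mul_abs_le_abs_add_add_abs_sub H (|x - a| - c),
    two_mul_abs_le_abs_add_add_abs_sub H (|x - a - c| - c)]

lemma setLIntegral_Ioo_le_setLIntegral_Ioo_comp_const_add (F : ℝ → ℝ≥0∞) {t r : ℝ}
    (ht : |t| ≤ r) (M : ℝ) :
    ∫⁻ w in Ioo (r - M) (M - r), F w ≤ ∫⁻ b in Ioo (-M) M, F (t + b) := by
  have hpre : (fun b => t + b) ⁻¹' Ioo (t - M) (t + M) = Ioo (-M) M := by
    rw [preimage_const_add_Ioo, sub_sub_cancel_left, add_sub_cancel_left]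
  rw [← hpre, (measurePreserving_add_left volume t).setLIntegral_comp_preimage_emb
    (measurableEmbedding_addLeft t)]
  obtain ⟨htl, htr⟩ := abs_le.1 ht
  exact lintegral_mono_set (Ioo_subset_Ioo (by linarith) (by linarith))

section ShiftAveraging

/-! `A i` stands for the mean of the test function `φ i`, so that `A i + b` is the mean of its
shift `φ i + b`. -/

variable {ι : Type*} [Fintype ι] {ν : Measure ℝ} {g : ℝ × ℝ → ℝ} {φ : ι → ℝ → ℝ} {A : ι → ℝ}
  {δ r : ℝ}

lemma sum_setLIntegral_error_ge (hg : Measurable g) {x : ℝ} (hbound : ∀ i, |φ i x| ≤ r)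
    (hsum : ∀ H, δ ≤ ∑ i, |H + (φ i x - A i)|) (M : ℝ) :
    ENNReal.ofReal δ * ENNReal.ofReal (2 * (M - r)) ≤
      ∑ i, ∫⁻ b in Ioo (-M) M, ENNReal.ofReal |g (x, φ i x + b) - (A i + b)| := by
  have hmeas : ∀ i, Measurable fun w => ENNReal.ofReal |g (x, w) - w + (φ i x - A i)| := fun i =>
    (((hg.comp measurable_prodMk_left).sub measurable_id).add_const _).abs.ennreal_ofReal
  calc ENNReal.ofReal δ * ENNReal.ofReal (2 * (M - r))
      = ∫⁻ _ in Ioo (r - M) (M - r), ENNReal.ofReal δ := by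
        rw [setLIntegral_const, Real.volume_Ioo]; ring_nf
    _ ≤ ∫⁻ w in Ioo (r - M) (M - r), ∑ i, ENNReal.ofReal |g (x, w) - w + (φ i x - A i)| := by
        refine lintegral_mono fun w => ?_
        rw [← ENNReal.ofReal_sum_of_nonneg fun i _ => abs_nonneg _]
        exact ENNReal.ofReal_le_ofReal (hsum _)
    _ = ∑ i, ∫⁻ w in Ioo (r - M) (M - r), ENNReal.ofReal |g (x, w) - w + (φ i x - A i)| :=
        lintegral_finsetSum _ fun i _ => hmeas i
    _ ≤ ∑ i, ∫⁻ b in Ioo (-M) M, ENNReal.ofReal |g (x, φ i x + b) - (A i + b)| := by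
        refine Finset.sum_le_sum fun i _ => ?_
        refine (setLIntegral_Ioo_le_setLIntegral_Ioo_comp_const_add _ (hbound i) M).trans_eq ?_
        congr! 4 with b
        ring

lemma sum_setLIntegral_lintegral_error_ge [IsProbabilityMeasure ν] (hg : Measurable g)
    (hφ : ∀ i, Measurable (φ i)) (hbound : ∀ᵐ x ∂ν, ∀ i, |φ i x| ≤ r)
    (hsum : ∀ x H, δ ≤ ∑ i, |H + (φ i x - A i)|) (M : ℝ) :
    ENNReal.ofReal δ * ENNReal.ofReal (2 * (M - r)) ≤
      ∑ i, ∫⁻ b in Ioo (-M) M, ∫⁻ x, ENNReal.ofReal |g (x, φ i x + b) - (A i + b)| ∂ν ∂volume := by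
  have hmeas : ∀ i, Measurable fun p : ℝ × ℝ =>
      ENNReal.ofReal |g (p.1, φ i p.1 + p.2) - (A i + p.2)| := fun i =>
    ((hg.comp (measurable_fst.prodMk (((hφ i).comp measurable_fst).add measurable_snd))).sub
      (measurable_snd.const_add _)).abs.ennreal_ofReal
  calc ENNReal.ofReal δ * ENNReal.ofReal (2 * (M - r))
      = ∫⁻ _, ENNReal.ofReal δ * ENNReal.ofReal (2 * (M - r)) ∂ν := by
        rw [lintegral_const, measure_univ, mul_one]
    _ ≤ ∫⁻ x, ∑ i, ∫⁻ b in Ioo (-M) M,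
          ENNReal.ofReal |g (x, φ i x + b) - (A i + b)| ∂volume ∂ν := by
        refine lintegral_mono_ae ?_
        filter_upwards [hbound] with x hx
        exact sum_setLIntegral_error_ge hg hx (hsum x) M
    _ = ∑ i, ∫⁻ x, ∫⁻ b in Ioo (-M) M, ENNReal.ofReal |g (x, φ i x + b) - (A i + b)| ∂volume ∂ν :=
        lintegral_finsetSum _ fun i _ => (hmeas i).lintegral_prod_right'
    _ = _ := by
        congr! 1 with i
        exact lintegral_lintegral_swap
          (f := fun x b => ENNReal.ofReal |g (x, φ i x + b) - (A i + b)|) (hmeas i).aemeasurable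

theorem exists_error_ge [Nonempty ι] [IsProbabilityMeasure ν] (hg : Measurable g)
    (hφ : ∀ i, Measurable (φ i)) (hbound : ∀ᵐ x ∂ν, ∀ i, |φ i x| ≤ r)
    (hsum : ∀ x H, δ ≤ ∑ i, |H + (φ i x - A i)|) {η : ℝ} (hη : η < δ / Fintype.card ι) :
    ∃ i b, ENNReal.ofReal η ≤ ∫⁻ x, ENNReal.ofReal |g (x, φ i x + b) - (A i + b)| ∂ν := by
  rcases le_or_gt η 0 with hη0 | hη0
  · exact ⟨Classical.arbitrary ι, 0, by simp [ENNReal.ofReal_of_nonpos hη0]⟩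
  by_contra! hlt
  set k : ℝ := (Fintype.card ι : ℝ)
  have hk : 0 < k := Nat.cast_pos.2 Fintype.card_pos
  have hkη : k * η < δ := by rwa [lt_div_iff₀ hk, mul_comm] at hη
  set M := max 0 ((δ * r + 1) / (δ - k * η))
  have hM : δ * r + 1 ≤ M * (δ - k * η) := by
    rw [← div_le_iff₀ (by linarith)]
    exact le_max_right _ _
  have hupper : ∑ i, ∫⁻ b in Ioo (-M) M,
      ∫⁻ x, ENNReal.ofReal |g (x, φ i x + b) - (A i + b)| ∂ν ∂volume ≤
      ENNReal.ofReal (k * (η * (2 * M))) :=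
    calc _ ≤ ∑ _ : ι, ∫⁻ _ in Ioo (-M) M, ENNReal.ofReal η :=
          Finset.sum_le_sum fun i _ => lintegral_mono fun b => (hlt i b).le
      _ = _ := by
          rw [ENNReal.ofReal_mul hk.le, ENNReal.ofReal_mul hη0.le]
          simp [Real.volume_Ioo, k, two_mul]
  have hreal := (sum_setLIntegral_lintegral_error_ge hg hφ hbound hsum M).trans hupper
  have hδ : 0 ≤ δ := by linarith [mul_pos hk hη0]
  rw [← ENNReal.ofReal_mul hδ, ENNReal.ofReal_le_ofReal_iff (by positivity)] at hreal
  nlinarith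

end ShiftAveraging

theorem stmt_8_general (μ : Measure ℝ)
    (hμ : μ (Set.Icc (0 : ℝ) 1) = 1)
    (g : ℝ × ℝ → ℝ) (hg : Measurable g)
    (ε : ℝ) (hε : 0 < ε) :
    ∃ f : ℝ → ℝ,
      (∀ x ∈ Set.Icc (0 : ℝ) 1, ∀ y ∈ Set.Icc (0 : ℝ) 1, |f x - f y| ≤ |x - y|) ∧
      ENNReal.ofReal (1 - Real.sqrt 3 / 2 - ε) ≤
        ∫⁻ x in Set.Icc (0 : ℝ) 1,
          ENNReal.ofReal |g (x, f x) - ∫ t in (0 : ℝ)..1, f t| ∂μ := by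
  -- `a` solves `a ^ 2 - a + 1/2 = 1 - 2a`: both V-shapes have mean `c`, and `a + c = 1 - a`.
  set a : ℝ := (√3 - 1) / 2
  set c : ℝ := 2 - √3
  have h3 : √3 ^ 2 = 3 := Real.sq_sqrt (by norm_num)
  have h3lo : 1 ≤ √3 := by nlinarith [Real.sqrt_nonneg 3]
  have h3hi : √3 ≤ 2 := by nlinarith [Real.sqrt_nonneg 3]
  let center : Bool → ℝ := fun κ => if κ then a else a + c
  have hcenter (κ : Bool) : center κ ∈ Icc (0 : ℝ) 1 := by
    cases κ <;> simp only [center, a, c, Bool.false_eq_true, if_true, if_false, mem_Icc] <;>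
      constructor <;> linarith
  have hmean (κ : Bool) : center κ ^ 2 - center κ + 1 / 2 = c := by
    cases κ <;> simp only [center, a, c, Bool.false_eq_true, if_true, if_false] <;> nlinarith
  let φ : Bool × Bool → ℝ → ℝ := fun i t => boolSign i.1 * |t - center i.2|
  have hbound : ∀ᵐ x ∂μ.restrict (Icc 0 1), ∀ i, |φ i x| ≤ 1 := by
    filter_upwards [ae_restrict_mem measurableSet_Icc] with x hx i
    rw [abs_mul (boolSign i.1), abs_boolSign, one_mul, abs_abs]
    exact abs_sub_le_of_nonneg_of_le hx.1 hx.2 (hcenter i.2).1 (hcenter i.2).2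
  have hη : 1 - √3 / 2 - ε < 2 * c / Fintype.card (Bool × Bool) := by
    simp only [Fintype.card_prod, Fintype.card_bool, Nat.reduceMul, Nat.cast_ofNat]
    linarith
  have : IsProbabilityMeasure (μ.restrict (Icc 0 1)) := ⟨by rw [Measure.restrict_apply_univ, hμ]⟩
  obtain ⟨⟨σ, κ⟩, b, hb⟩ := exists_error_ge (A := fun i => boolSign i.1 * c) hg
    (fun i => by fun_prop) hbound (two_mul_le_sum_abs_add_boolSign_mul a c) hη
  refine ⟨fun t => boolSign σ * |t - center κ| + b, fun x _ y _ => ?_, ?_⟩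
  · simpa [Real.dist_eq] using
      (lipschitzWith_const_mul_abs_sub_add_const (abs_boolSign σ) (center κ) b).dist_le_mul x y
  · rwa [integral_const_mul_abs_sub_add_const _ _ (hcenter κ), hmean]

/-- Even allowing arbitrary measurable post-processing of the
observed sample, no randomized single-sample algorithm on [0,1] achieves
worst-case expected error below 1 − √3/2 (the error is measured via the lower
Lebesgue integral of the nonnegative integrand). -/
theorem stmt_8 (μ : Measure ℝ) [IsProbabilityMeasure μ]
    (hμ : μ (Set.Icc (0 : ℝ) 1) = 1)
    (g : ℝ × ℝ → ℝ) (hg : Measurable g)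
    (ε : ℝ) (hε : 0 < ε) :
    ∃ f : ℝ → ℝ,
      (∀ x ∈ Set.Icc (0 : ℝ) 1, ∀ y ∈ Set.Icc (0 : ℝ) 1, |f x - f y| ≤ |x - y|) ∧
      ENNReal.ofReal (1 - Real.sqrt 3 / 2 - ε) ≤
        ∫⁻ x in Set.Icc (0 : ℝ) 1,
          ENNReal.ofReal |g (x, f x) - ∫ t in (0 : ℝ)..1, f t| ∂μ :=
  stmt_8_general μ hμ g hg ε hε
end

section
/- Let 0 ≤ c < 1/2, let f ∈ L₀, and let z_i < z_j be points of [c, 1−c] with f(z_i) = f(z_j) = 0 and f(x) ≥ 0 for all x ∈ [z_i, z_j]. Define f' : [0,1] → ℝ by f'(x) = min(x − z_i, z_j − x) for x ∈ [z_i, z_j] and f'(x) = f(x) otherwise, and let f'' = f' − ∫₀¹ f'(t) dt. Then f'' ∈ L₀ and ∫_c^{1−c} |f''(x)| dx ≥ ∫_c^{1−c} |f(x)| dx. (Replacing f on a nonnegative arc between two zeroes by the maximal tent, and renormalizing to mean zero, does not decrease the estimation error against uniform sampling on [c, 1−c].) -/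
/-!
On `[0, 1]` the modified function equals `max f (tent zi zj)`: a 1-Lipschitz `f` vanishing at
`zi` and `zj` lies below the tent on `[zi, zj]` and above it outside. Being a maximum of
1-Lipschitz functions it is 1-Lipschitz. The added mass `m = ∫ (f' - f)` is nonnegative and
supported in `(zi, zj) ⊆ [c, 1 - c]`, and as `f ≥ 0` on `[zi, zj]` it raises `∫_c^{1-c} |f|` by
exactly `m`. Subtracting the mean `m` costs at most `(1 - 2c) m` of that gain.
-/

open MeasureTheory intervalIntegral Set

theorem integral_abs_le_integral_abs_sub_const {f g : ℝ → ℝ} {u v m : ℝ} (huv : u ≤ v)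
    (hlen : v - u ≤ 1) (hm : 0 ≤ m) (hf : IntervalIntegrable f volume u v)
    (hg : IntervalIntegrable g volume u v) (hgap : ∫ x in u..v, (|g x| - |f x|) = m) :
    ∫ x in u..v, |f x| ≤ ∫ x in u..v, |g x - m| :=
  calc ∫ x in u..v, |f x|
      = (∫ x in u..v, |g x|) - m := by rw [← hgap, integral_sub hg.abs hf.abs]; ring
    _ ≤ (∫ x in u..v, |g x|) - (v - u) * m := by nlinarith
    _ = ∫ x in u..v, (|g x| - m) := by
        rw [integral_sub hg.abs intervalIntegrable_const, intervalIntegral.integral_const,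
          smul_eq_mul]
    _ ≤ ∫ x in u..v, |g x - m| :=
        integral_mono_on huv (hg.abs.sub intervalIntegrable_const)
          (hg.sub intervalIntegrable_const).abs fun x _ => by
            simpa [abs_of_nonneg hm] using abs_sub_abs_le_abs_sub (g x) m

theorem lipschitzOnWith_one_iff_abs_sub_le {f : ℝ → ℝ} {s : Set ℝ} :
    LipschitzOnWith 1 f s ↔ ∀ x ∈ s, ∀ y ∈ s, |f x - f y| ≤ |x - y| := by
  simp [lipschitzOnWith_iff_dist_le_mul, Real.dist_eq]

def tent (a b x : ℝ) : ℝ := min (x - a) (b - x)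

theorem lipschitzWith_tent (a b : ℝ) : LipschitzWith 1 (tent a b) :=
  LipschitzWith.of_dist_le_mul fun x y => by
    simpa [tent, Real.dist_eq, abs_sub_comm y x] using
      abs_min_sub_min_le_max (x - a) (b - x) (y - a) (b - y)

theorem tent_nonneg {a b x : ℝ} (hx : x ∈ Icc a b) : 0 ≤ tent a b x :=
  le_min (sub_nonneg.2 hx.1) (sub_nonneg.2 hx.2)

noncomputable def tentReplace (f : ℝ → ℝ) (a b x : ℝ) : ℝ :=
  if x ∈ Icc a b then tent a b x else f x

section

variable {f : ℝ → ℝ} {s : Set ℝ} {a b x : ℝ}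

theorem support_tentReplace_sub_subset (hab : a ≤ b) (hfa : f a = 0) (hfb : f b = 0) :
    Function.support (fun x => tentReplace f a b x - f x) ⊆ Ioo a b := by
  intro x hx
  by_contra hxab
  apply hx
  by_cases hx' : x ∈ Icc a b
  · obtain rfl | rfl : x = a ∨ x = b := by
      simpa [hab] using (Icc_sdiff_Ioo_same hab).subset ⟨hx', hxab⟩
    · simp [tentReplace, tent, hab, hfa]
    · simp [tentReplace, tent, hab, hfb]
  · simp [tentReplace, hx']

theorem integral_tentReplace_sub_eq (hab : a ≤ b) (hfa : f a = 0) (hfb : f b = 0) {u v : ℝ}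
    (hu : u ≤ a) (hv : b ≤ v) :
    ∫ x in u..v, (tentReplace f a b x - f x) = ∫ x in a..b, (tentReplace f a b x - f x) := by
  have hsupp := support_tentReplace_sub_subset hab hfa hfb
  rw [integral_eq_integral_of_support_subset (hsupp.trans (Ioo_subset_Ioc_self.trans
      (Ioc_subset_Ioc hu hv))), integral_eq_integral_of_support_subset
      (hsupp.trans Ioo_subset_Ioc_self)]

theorem abs_tentReplace_sub_abs (hf : ∀ x ∈ Icc a b, 0 ≤ f x) (x : ℝ) :
    |tentReplace f a b x| - |f x| = tentReplace f a b x - f x := by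
  by_cases hx : x ∈ Icc a b
  · rw [tentReplace, if_pos hx, abs_of_nonneg (tent_nonneg hx), abs_of_nonneg (hf x hx)]
  · simp [tentReplace, hx]

namespace LipschitzOnWith

variable (hf : LipschitzOnWith 1 f s) (ha : a ∈ s) (hb : b ∈ s) (hfa : f a = 0) (hfb : f b = 0)
include hf ha hb hfa hfb

theorem le_tent (hx : x ∈ s) (hxab : x ∈ Icc a b) : f x ≤ tent a b x := by
  have hxa := lipschitzOnWith_one_iff_abs_sub_le.1 hf x hx a ha
  have hxb := lipschitzOnWith_one_iff_abs_sub_le.1 hf x hx b hb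
  rw [hfa, sub_zero, abs_of_nonneg (sub_nonneg.2 hxab.1)] at hxa
  rw [hfb, sub_zero, abs_sub_comm, abs_of_nonneg (sub_nonneg.2 hxab.2)] at hxb
  exact le_min (le_of_abs_le hxa) (le_of_abs_le hxb)

theorem tent_le (hx : x ∈ s) (hxab : x ∉ Icc a b) : tent a b x ≤ f x := by
  have hxa := lipschitzOnWith_one_iff_abs_sub_le.1 hf x hx a ha
  have hxb := lipschitzOnWith_one_iff_abs_sub_le.1 hf x hx b hb
  rw [hfa, sub_zero] at hxa
  rw [hfb, sub_zero] at hxb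
  rw [tent]
  rcases not_and_or.1 hxab with h | h
  · rw [abs_of_neg (sub_neg.2 (not_le.1 h))] at hxa
    linarith [min_le_left (x - a) (b - x), neg_abs_le (f x)]
  · rw [abs_of_pos (sub_pos.2 (not_le.1 h))] at hxb
    linarith [min_le_right (x - a) (b - x), neg_abs_le (f x)]

theorem tentReplace_eq_max (hx : x ∈ s) : tentReplace f a b x = max (f x) (tent a b x) := by
  by_cases hxab : x ∈ Icc a b
  · rw [tentReplace, if_pos hxab, max_eq_right (hf.le_tent ha hb hfa hfb hx hxab)]
  · rw [tentReplace, if_neg hxab, max_eq_left (hf.tent_le ha hb hfa hfb hx hxab)]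

theorem le_tentReplace (hx : x ∈ s) : f x ≤ tentReplace f a b x :=
  (hf.tentReplace_eq_max ha hb hfa hfb hx).symm ▸ le_max_left _ _

theorem integral_tentReplace_sub_nonneg (hab : a ≤ b) (hs : Icc a b ⊆ s) :
    0 ≤ ∫ x in a..b, (tentReplace f a b x - f x) :=
  integral_nonneg hab fun _ hx => sub_nonneg.2 (hf.le_tentReplace ha hb hfa hfb (hs hx))

theorem tentReplace : LipschitzOnWith 1 (tentReplace f a b) s := by
  have hmax : LipschitzOnWith 1 (fun x => max (f x) (tent a b x)) s := by
    simpa only [mul_one, max_self, Function.comp_def] using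
      lipschitzWith_max.comp_lipschitzOnWith (hf.prodMk (lipschitzWith_tent a b).lipschitzOnWith)
  intro x hx y hy
  rw [hf.tentReplace_eq_max ha hb hfa hfb hx, hf.tentReplace_eq_max ha hb hfa hfb hy]
  exact hmax hx hy

end LipschitzOnWith

end

theorem stmt_13_general (c : ℝ) (hc0 : 0 ≤ c)
    (f : ℝ → ℝ)
    (hlip : ∀ x ∈ Set.Icc (0 : ℝ) 1, ∀ y ∈ Set.Icc (0 : ℝ) 1,
      |f x - f y| ≤ |x - y|)
    (hint : ∫ x in (0 : ℝ)..1, f x = 0)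
    (zi zj : ℝ) (hzi : zi ∈ Set.Icc c (1 - c)) (hzj : zj ∈ Set.Icc c (1 - c))
    (hij : zi < zj) (hfzi : f zi = 0) (hfzj : f zj = 0)
    (hnonneg : ∀ x ∈ Set.Icc zi zj, 0 ≤ f x)
    (f' f'' : ℝ → ℝ)
    (hf' : ∀ x, f' x =
      if x ∈ Set.Icc zi zj then min (x - zi) (zj - x) else f x)
    (hf'' : ∀ x, f'' x = f' x - ∫ t in (0 : ℝ)..1, f' t) :
    ((∀ x ∈ Set.Icc (0 : ℝ) 1, ∀ y ∈ Set.Icc (0 : ℝ) 1,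
        |f'' x - f'' y| ≤ |x - y|) ∧
      (∫ x in (0 : ℝ)..1, f'' x = 0)) ∧
    (∫ x in c..(1 - c), |f x|) ≤ ∫ x in c..(1 - c), |f'' x| := by
  obtain rfl : f' = tentReplace f zi zj := funext hf'
  set g := tentReplace f zi zj
  set m := ∫ t in (0 : ℝ)..1, g t
  obtain rfl : f'' = fun x => g x - m := funext hf''
  have hzi01 : zi ∈ Icc (0 : ℝ) 1 := ⟨hc0.trans hzi.1, by linarith [hzj.2]⟩
  have hzj01 : zj ∈ Icc (0 : ℝ) 1 := ⟨by linarith [hzi.1], by linarith [hzj.2]⟩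
  have hf := lipschitzOnWith_one_iff_abs_sub_le.2 hlip
  have hg := hf.tentReplace hzi01 hzj01 hfzi hfzj
  have hcc : c ≤ 1 - c := by linarith [hzi.1, hzj.2]
  have hsub : Icc c (1 - c) ⊆ Icc 0 1 := Icc_subset_Icc hc0 (by linarith)
  have hm : m = ∫ x in zi..zj, (g x - f x) := by
    rw [← integral_tentReplace_sub_eq hij.le hfzi hfzj hzi01.1 hzj01.2,
      integral_sub (hg.continuousOn.intervalIntegrable_of_Icc zero_le_one)
        (hf.continuousOn.intervalIntegrable_of_Icc zero_le_one), hint, sub_zero]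
  have hm0 : 0 ≤ m := hm ▸ hf.integral_tentReplace_sub_nonneg hzi01 hzj01 hfzi hfzj hij.le
    (Icc_subset_Icc hzi01.1 hzj01.2)
  refine ⟨⟨fun x hx y hy => ?_, ?_⟩, ?_⟩
  · rw [sub_sub_sub_cancel_right]
    exact lipschitzOnWith_one_iff_abs_sub_le.1 hg x hx y hy
  · rw [integral_sub (hg.continuousOn.intervalIntegrable_of_Icc zero_le_one)
      intervalIntegrable_const]
    simp [m, g]
  refine integral_abs_le_integral_abs_sub_const hcc (by linarith) hm0
    ((hf.continuousOn.mono hsub).intervalIntegrable_of_Icc hcc)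
    ((hg.continuousOn.mono hsub).intervalIntegrable_of_Icc hcc) ?_
  rw [integral_congr fun x _ => abs_tentReplace_sub_abs hnonneg x,
    integral_tentReplace_sub_eq hij.le hfzi hfzj hzi.1 hzj.2, hm]

/-- Replacing a mean-zero 1-Lipschitz function f on a nonnegative
arc between two zeroes z_i < z_j in [c, 1−c] by the maximal tent, and
renormalizing to mean zero, yields a function in L₀ whose estimation error
against uniform sampling on [c, 1−c] is at least that of f. -/
theorem stmt_13 (c : ℝ) (hc0 : 0 ≤ c) (hc : c < 1 / 2)
    (f : ℝ → ℝ)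
    (hlip : ∀ x ∈ Set.Icc (0 : ℝ) 1, ∀ y ∈ Set.Icc (0 : ℝ) 1,
      |f x - f y| ≤ |x - y|)
    (hint : ∫ x in (0 : ℝ)..1, f x = 0)
    (zi zj : ℝ) (hzi : zi ∈ Set.Icc c (1 - c)) (hzj : zj ∈ Set.Icc c (1 - c))
    (hij : zi < zj) (hfzi : f zi = 0) (hfzj : f zj = 0)
    (hnonneg : ∀ x ∈ Set.Icc zi zj, 0 ≤ f x)
    (f' f'' : ℝ → ℝ)
    (hf' : ∀ x, f' x =
      if x ∈ Set.Icc zi zj then min (x - zi) (zj - x) else f x)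
    (hf'' : ∀ x, f'' x = f' x - ∫ t in (0 : ℝ)..1, f' t) :
    ((∀ x ∈ Set.Icc (0 : ℝ) 1, ∀ y ∈ Set.Icc (0 : ℝ) 1,
        |f'' x - f'' y| ≤ |x - y|) ∧
      (∫ x in (0 : ℝ)..1, f'' x = 0)) ∧
    (∫ x in c..(1 - c), |f x|) ≤ ∫ x in c..(1 - c), |f'' x| :=
  stmt_13_general c hc0 f hlip hint zi zj hzi hzj hij hfzi hfzj hnonneg f' f'' hf' hf''
end
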